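/- arXiv:2207.07995 — 2 statements merged into one kernel-verified Lean document; each statement's English description precedes it below -/
import Mathlib

section
/- Let A be a residuated lattice and F a filter of A. Then the sink σ(F) = {a ∈ A | a⊥ ⋎ F = A} is a filter of A contained in F, where a⊥ = {x ∈ A | x ∨ a = 1} and ⋎ is join in the lattice of filters. -/
structure ResiduatedLattice (A : Type*) [Lattice A] [BoundedOrder A] where
  mul : A → A → A
  himp : A → A → A
  mul_comm : ∀ x y : A, mul x y = mul y x
  mul_assoc : ∀ x y z : A, mul (mul x y) z = mul x (mul y z)
  mul_top : ∀ x : A, mul x ⊤ = x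
  adj : ∀ x y z : A, mul x z ≤ y ↔ z ≤ himp x y

namespace ResiduatedLattice

variable {A : Type*} [Lattice A] [BoundedOrder A]

/-- ¬a := a → 0 -/
def neg (R : ResiduatedLattice A) (a : A) : A := R.himp a ⊥

/-- A filter: nonempty, closed under ⊙, and closed under joining with arbitrary elements. -/
def IsFilter (R : ResiduatedLattice A) (F : Set A) : Prop :=
  F.Nonempty ∧ (∀ x ∈ F, ∀ y ∈ F, R.mul x y ∈ F) ∧ (∀ x ∈ F, ∀ y : A, x ⊔ y ∈ F)

/-- Join of two filters: the filter generated by their union. -/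
def FJoin (R : ResiduatedLattice A) (F G : Set A) : Set A :=
  {c | ∃ f ∈ F, ∃ g ∈ G, R.mul f g ≤ c}

/-- Coannulet a⊥ = {x | x ∨ a = 1}. -/
def perp (R : ResiduatedLattice A) (a : A) : Set A := {x | x ⊔ a = ⊤}

/-- Powers aⁿ with a⁰ = 1 = ⊤. -/
def pow (R : ResiduatedLattice A) (a : A) : ℕ → A
  | 0 => ⊤
  | n + 1 => R.mul a (pow R a n)

/-- Filter generated by a filter F together with an element x. -/
def FGen (R : ResiduatedLattice A) (F : Set A) (x : A) : Set A :=
  {a | ∃ f ∈ F, ∃ n : ℕ, R.mul f (R.pow x n) ≤ a}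

/-- Principal filter generated by a. -/
def principal (R : ResiduatedLattice A) (a : A) : Set A :=
  {b | ∃ n : ℕ, R.pow a n ≤ b}

/-- The sink σ(F) = {a | a⊥ ⋎ F = A}. -/
def sink (R : ResiduatedLattice A) (F : Set A) : Set A :=
  {a | R.FJoin (R.perp a) F = Set.univ}

/-- Purity condition: a⊥ ⋎ F = A for every a ∈ F. -/
def PureOn (R : ResiduatedLattice A) (F : Set A) : Prop :=
  ∀ a ∈ F, R.FJoin (R.perp a) F = Set.univ

/-- Prime filter. -/
def IsPrime (R : ResiduatedLattice A) (F : Set A) : Prop :=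
  R.IsFilter F ∧ F ≠ Set.univ ∧ ∀ x y : A, x ⊔ y ∈ F → x ∈ F ∨ y ∈ F

/-- Minimal prime filter. -/
def IsMinimalPrime (R : ResiduatedLattice A) (F : Set A) : Prop :=
  R.IsPrime F ∧ ∀ G : Set A, R.IsPrime G → G ⊆ F → G = F

/-- Filter generated by an arbitrary set X. -/
def gen (R : ResiduatedLattice A) (X : Set A) : Set A :=
  {a | ∃ l : List A, (∀ x ∈ l, x ∈ X) ∧ l.foldr R.mul ⊤ ≤ a}

/-- Purely-prime filter: proper pure filter p such that F₁ ∩ F₂ = p for pure filters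
implies F₁ = p or F₂ = p. -/
def PurelyPrime (R : ResiduatedLattice A) (p : Set A) : Prop :=
  R.IsFilter p ∧ R.PureOn p ∧ p ≠ Set.univ ∧
    ∀ F₁ F₂ : Set A, R.IsFilter F₁ → R.PureOn F₁ → R.IsFilter F₂ → R.PureOn F₂ →
      F₁ ∩ F₂ = p → F₁ = p ∨ F₂ = p

/-- (H : a) = {x | x ∨ a ∈ H}. -/
def res (R : ResiduatedLattice A) (H : Set A) (a : A) : Set A :=
  {x | x ⊔ a ∈ H}

end ResiduatedLattice

open ResiduatedLattice

variable {A : Type*} [Lattice A] [BoundedOrder A]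

namespace ResiduatedLattice

lemma mul_mono_right (R : ResiduatedLattice A) (x : A) {y z : A} (h : y ≤ z) :
    R.mul x y ≤ R.mul x z := by
  rw [R.adj]
  exact h.trans ((R.adj x (R.mul x z) z).mp le_rfl)

lemma mul_mono_left (R : ResiduatedLattice A) {x y : A} (z : A) (h : x ≤ y) :
    R.mul x z ≤ R.mul y z := by
  rw [R.mul_comm x z, R.mul_comm y z]
  exact R.mul_mono_right z h

lemma mul_le_left (R : ResiduatedLattice A) (x y : A) : R.mul x y ≤ x := by
  have := R.mul_mono_right x (le_top (a := y))
  rwa [R.mul_top] at this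

lemma mul_sup (R : ResiduatedLattice A) (x y z : A) :
    R.mul x (y ⊔ z) = R.mul x y ⊔ R.mul x z := by
  apply le_antisymm
  · rw [R.adj]
    exact sup_le ((R.adj _ _ _).mp le_sup_left) ((R.adj _ _ _).mp le_sup_right)
  · exact sup_le (R.mul_mono_right x le_sup_left) (R.mul_mono_right x le_sup_right)

lemma sink_iff (R : ResiduatedLattice A) (F : Set A) (a : A) :
    a ∈ R.sink F ↔ ∃ x f, x ⊔ a = ⊤ ∧ f ∈ F ∧ R.mul x f ≤ ⊥ := by
  constructor
  · intro h
    have : (⊥ : A) ∈ R.FJoin (R.perp a) F := by rw [h]; trivial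
    obtain ⟨x, hx, f, hf, hle⟩ := this
    exact ⟨x, f, hx, hf, hle⟩
  · rintro ⟨x, f, hx, hf, hle⟩
    apply Set.eq_univ_of_forall
    intro c
    exact ⟨x, hx, f, hf, hle.trans bot_le⟩

end ResiduatedLattice

theorem stmt5 (R : ResiduatedLattice A) (F : Set A) (hF : R.IsFilter F) :
    R.IsFilter (R.sink F) ∧ R.sink F ⊆ F := by
  obtain ⟨⟨f0, hf0⟩, hmul, hsup⟩ := hF
  constructor
  · refine ⟨⟨⊤, ?_⟩, ?_, ?_⟩
    · rw [R.sink_iff]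
      refine ⟨⊥, f0, by simp, hf0, ?_⟩
      have := R.mul_le_left ⊥ f0
      exact this
    · intro a ha b hb
      rw [R.sink_iff] at ha hb ⊢
      obtain ⟨x, f, hx, hf, hxf⟩ := ha
      obtain ⟨y, g, hy, hg, hyg⟩ := hb
      refine ⟨x ⊔ y, R.mul f g, ?_, hmul f hf g hg, ?_⟩
      · apply le_antisymm le_top
        have h1 : (⊤ : A) = R.mul (x ⊔ y ⊔ a) (x ⊔ y ⊔ b) := by
          have hxa : x ⊔ y ⊔ a = ⊤ := by
            rw [sup_right_comm]
            rw [hx]; simp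
          have hyb : x ⊔ y ⊔ b = ⊤ := by
            rw [sup_assoc, hy]; simp
          rw [hxa, hyb, R.mul_top]
        rw [h1]
        set u := x ⊔ y
        calc R.mul (u ⊔ a) (u ⊔ b)
            = R.mul (u ⊔ a) u ⊔ R.mul (u ⊔ a) b := R.mul_sup _ _ _
          _ ≤ u ⊔ R.mul a b := by
              apply sup_le
              · rw [R.mul_comm]
                exact (R.mul_le_left _ _).trans le_sup_left
              · rw [R.mul_comm, R.mul_sup]
                apply sup_le
                · rw [R.mul_comm]
                  exact (R.mul_le_left _ _).trans le_sup_left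
                · rw [R.mul_comm]
                  exact le_sup_right
      · rw [R.mul_comm, R.mul_sup]
        apply sup_le
        · rw [R.mul_comm]
          exact (R.mul_mono_right x ((R.mul_le_left f g))).trans hxf
        · rw [R.mul_comm]
          have hfg : R.mul f g ≤ g := by rw [R.mul_comm]; exact R.mul_le_left g f
          exact (R.mul_mono_right y hfg).trans hyg
    · intro a ha y
      rw [R.sink_iff] at ha ⊢
      obtain ⟨x, f, hx, hf, hxf⟩ := ha
      refine ⟨x, f, ?_, hf, hxf⟩
      rw [← sup_assoc, hx]; simp
  · intro a ha
    rw [R.sink_iff] at ha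
    obtain ⟨x, f, hx, hf, hxf⟩ := ha
    have hfb : R.mul f x ≤ ⊥ := by rwa [R.mul_comm]
    have hfa : f ≤ a := by
      have h1 : f = R.mul f (x ⊔ a) := by rw [hx, R.mul_top]
      rw [h1, R.mul_sup]
      apply sup_le
      · exact hfb.trans bot_le
      · rw [R.mul_comm]; exact R.mul_le_left a f
    have h2 := hsup f hf a
    rwa [sup_eq_right.mpr hfa] at h2
end

section
/- A residuated lattice A is mp (every prime filter contains a unique minimal prime filter) if and only if for all x, y ∈ A with x ∨ y = 1, one has x⊥ ⋎ y⊥ = A, if and only if every coannulet x⊥ is a pure filter. -/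
open ResiduatedLattice

variable {A : Type*} [Lattice A] [BoundedOrder A]

section Aux

variable {A : Type*} [Lattice A] [BoundedOrder A] (R : ResiduatedLattice A)

lemma rmul_mono {x x' y y' : A} (h1 : x ≤ x') (h2 : y ≤ y') :
    R.mul x y ≤ R.mul x' y' := by
  have hr : ∀ a : A, ∀ b b' : A, b ≤ b' → R.mul a b ≤ R.mul a b' := by
    intro a b b' hb
    have := (R.adj a (R.mul a b') b').mp le_rfl
    exact (R.adj a (R.mul a b') b).mpr (le_trans hb this)
  calc R.mul x y ≤ R.mul x y' := hr x y y' h2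
    _ = R.mul y' x := R.mul_comm _ _
    _ ≤ R.mul y' x' := hr y' x x' h1
    _ = R.mul x' y' := R.mul_comm _ _

lemma rmul_le_left (x y : A) : R.mul x y ≤ x := by
  have := rmul_mono R (le_refl x) (le_top (a := y))
  rwa [R.mul_top] at this

lemma rmul_le_right (x y : A) : R.mul x y ≤ y := by
  rw [R.mul_comm]; exact rmul_le_left R y x

lemma rtop_mul (x : A) : R.mul ⊤ x = x := by rw [R.mul_comm, R.mul_top]

lemma rmul_sup (x y z : A) : R.mul x (y ⊔ z) = R.mul x y ⊔ R.mul x z := by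
  apply le_antisymm
  · apply (R.adj x _ _).mpr
    apply sup_le
    · exact (R.adj x _ _).mp le_sup_left
    · exact (R.adj x _ _).mp le_sup_right
  · exact sup_le (rmul_mono R le_rfl le_sup_left) (rmul_mono R le_rfl le_sup_right)

lemma rsup_mul (x y z : A) : R.mul (x ⊔ y) z = R.mul x z ⊔ R.mul y z := by
  rw [R.mul_comm, rmul_sup R, R.mul_comm z x, R.mul_comm z y]

namespace ResiduatedLattice

lemma top_mem {F : Set A} (hF : R.IsFilter F) : ⊤ ∈ F := by
  obtain ⟨a, ha⟩ := hF.1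
  have := hF.2.2 a ha ⊤
  rwa [sup_top_eq] at this

lemma up_closed {F : Set A} (hF : R.IsFilter F) {a b : A} (ha : a ∈ F) (hab : a ≤ b) :
    b ∈ F := by
  have := hF.2.2 a ha b
  rwa [sup_eq_right.mpr hab] at this

lemma eq_univ_of_bot_mem {F : Set A} (hF : R.IsFilter F) (h : ⊥ ∈ F) : F = Set.univ :=
  Set.eq_univ_of_forall fun x => up_closed R hF h bot_le

lemma perp_filter (a : A) : R.IsFilter (R.perp a) := by
  refine ⟨⟨⊤, by simp [perp]⟩, ?_, ?_⟩
  · intro x hx y hy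
    have key : R.mul (x ⊔ a) (y ⊔ a) ≤ R.mul x y ⊔ a := by
      rw [rsup_mul R, rmul_sup R, rmul_sup R]
      refine sup_le (sup_le le_sup_left ?_) (sup_le ?_ ?_)
      · exact le_trans (rmul_le_right R x a) le_sup_right
      · exact le_trans (rmul_le_left R a y) le_sup_right
      · exact le_trans (rmul_le_left R a a) le_sup_right
    have hx' : x ⊔ a = ⊤ := hx
    have hy' : y ⊔ a = ⊤ := hy
    rw [hx', hy', R.mul_top] at key
    exact top_le_iff.mp key
  · intro x hx y
    have hx' : x ⊔ a = ⊤ := hx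
    show (x ⊔ y) ⊔ a = ⊤
    rw [sup_right_comm, hx', top_sup_eq]

lemma FJoin_filter {F G : Set A} (hF : R.IsFilter F) (hG : R.IsFilter G) :
    R.IsFilter (R.FJoin F G) := by
  refine ⟨⟨⊤, ⊤, top_mem R hF, ⊤, top_mem R hG, le_top⟩, ?_, ?_⟩
  · rintro x ⟨f1, hf1, g1, hg1, h1⟩ y ⟨f2, hf2, g2, hg2, h2⟩
    refine ⟨R.mul f1 f2, hF.2.1 _ hf1 _ hf2, R.mul g1 g2, hG.2.1 _ hg1 _ hg2, ?_⟩
    have : R.mul (R.mul f1 f2) (R.mul g1 g2) = R.mul (R.mul f1 g1) (R.mul f2 g2) := by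
      rw [R.mul_assoc, R.mul_assoc]
      congr 1
      rw [← R.mul_assoc, ← R.mul_assoc, R.mul_comm f2 g1]
    rw [this]
    exact rmul_mono R h1 h2
  · rintro x ⟨f, hf, g, hg, h⟩ y
    exact ⟨f, hf, g, hg, le_trans h le_sup_left⟩

lemma FJoin_mono {F F' G G' : Set A} (hF : F ⊆ F') (hG : G ⊆ G') :
    R.FJoin F G ⊆ R.FJoin F' G' := by
  rintro x ⟨f, hf, g, hg, h⟩
  exact ⟨f, hF hf, g, hG hg, h⟩

lemma FJoin_comm (F G : Set A) : R.FJoin F G = R.FJoin G F := by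
  have : ∀ F G : Set A, R.FJoin F G ⊆ R.FJoin G F := by
    rintro F G x ⟨f, hf, g, hg, h⟩
    exact ⟨g, hg, f, hf, by rwa [R.mul_comm]⟩
  exact le_antisymm (this F G) (this G F)

lemma FJoin_self {F : Set A} (hF : R.IsFilter F) : R.FJoin F F ⊆ F := by
  rintro x ⟨f, hf, g, hg, h⟩
  exact up_closed R hF (hF.2.1 _ hf _ hg) h

lemma subset_FJoin_left {F G : Set A} (hG : R.IsFilter G) : F ⊆ R.FJoin F G :=
  fun x hx => ⟨x, hx, ⊤, top_mem R hG, by rw [R.mul_top]⟩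

lemma subset_FJoin_right {F G : Set A} (hF : R.IsFilter F) : G ⊆ R.FJoin F G := by
  rw [FJoin_comm]; exact subset_FJoin_left R hF

lemma pow_add (a : A) (n m : ℕ) : R.pow a (n + m) = R.mul (R.pow a n) (R.pow a m) := by
  induction n with
  | zero => simp [pow, rtop_mul]
  | succ k ih =>
    have : k + 1 + m = (k + m) + 1 := by omega
    rw [this]
    show R.mul a (R.pow a (k + m)) = R.mul (R.mul a (R.pow a k)) (R.pow a m)
    rw [ih, R.mul_assoc]

lemma pow_mem {F : Set A} (hF : R.IsFilter F) {a : A} (ha : a ∈ F) (n : ℕ) :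
    R.pow a n ∈ F := by
  induction n with
  | zero => exact top_mem R hF
  | succ k ih => exact hF.2.1 _ ha _ ih

lemma pow_sup_le (a b : A) : ∀ n m : ℕ, R.pow (a ⊔ b) (n + m) ≤ R.pow a n ⊔ R.pow b m := by
  intro n
  induction n with
  | zero =>
    intro m
    rw [Nat.zero_add]
    show R.pow (a ⊔ b) m ≤ ⊤ ⊔ R.pow b m
    simp
  | succ k ihk =>
    intro m
    induction m with
    | zero =>
      show R.pow (a ⊔ b) (k + 1 + 0) ≤ R.pow a (k+1) ⊔ ⊤
      simp
    | succ j ihj =>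
      have heq : k + 1 + (j + 1) = (k + 1 + j) + 1 := by omega
      rw [heq]
      show R.mul (a ⊔ b) (R.pow (a ⊔ b) (k + 1 + j)) ≤ R.pow a (k+1) ⊔ R.pow b (j+1)
      have h1 : R.pow (a ⊔ b) (k + 1 + j) ≤ R.pow a (k+1) ⊔ R.pow b j := ihj
      have h2 : R.pow (a ⊔ b) (k + 1 + j) ≤ R.pow a k ⊔ R.pow b (j+1) := by
        have : k + 1 + j = k + (j + 1) := by omega
        rw [this]; exact ihk (j+1)
      calc R.mul (a ⊔ b) (R.pow (a ⊔ b) (k + 1 + j))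
          ≤ R.mul a (R.pow (a ⊔ b) (k+1+j)) ⊔ R.mul b (R.pow (a ⊔ b) (k+1+j)) := by
            rw [← rsup_mul R]
        _ ≤ R.mul a (R.pow a k ⊔ R.pow b (j+1)) ⊔ R.mul b (R.pow a (k+1) ⊔ R.pow b j) :=
            sup_le_sup (rmul_mono R le_rfl h2) (rmul_mono R le_rfl h1)
        _ ≤ R.pow a (k+1) ⊔ R.pow b (j+1) := by
            rw [rmul_sup R, rmul_sup R]
            refine sup_le (sup_le ?_ ?_) (sup_le ?_ ?_)
            · exact le_sup_left
            · exact le_trans (rmul_le_right R _ _) le_sup_right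
            · exact le_trans (rmul_le_right R _ _) le_sup_left
            · exact le_sup_right

lemma FGen_filter {F : Set A} (hF : R.IsFilter F) (x : A) : R.IsFilter (R.FGen F x) := by
  refine ⟨⟨⊤, ⊤, top_mem R hF, 0, le_top⟩, ?_, ?_⟩
  · rintro a ⟨f1, hf1, n, h1⟩ b ⟨f2, hf2, m, h2⟩
    refine ⟨R.mul f1 f2, hF.2.1 _ hf1 _ hf2, n + m, ?_⟩
    rw [pow_add]
    have : R.mul (R.mul f1 f2) (R.mul (R.pow x n) (R.pow x m)) =
        R.mul (R.mul f1 (R.pow x n)) (R.mul f2 (R.pow x m)) := by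
      rw [R.mul_assoc, R.mul_assoc]
      congr 1
      rw [← R.mul_assoc, ← R.mul_assoc, R.mul_comm f2 (R.pow x n)]
    rw [this]
    exact rmul_mono R h1 h2
  · rintro a ⟨f, hf, n, h⟩ y
    exact ⟨f, hf, n, le_trans h le_sup_left⟩

lemma subset_FGen {F : Set A} (x : A) : F ⊆ R.FGen F x :=
  fun a ha => ⟨a, ha, 0, by show R.mul a ⊤ ≤ a; rw [R.mul_top]⟩

lemma mem_FGen {F : Set A} (hF : R.IsFilter F) (x : A) : x ∈ R.FGen F x :=
  ⟨⊤, top_mem R hF, 1, by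
    show R.mul ⊤ (R.mul x (R.pow x 0)) ≤ x
    rw [rtop_mul R]
    show R.mul x ⊤ ≤ x
    rw [R.mul_top]⟩

/-- Prime separation: a filter disjoint from a nonempty ∨-closed set extends to a
prime filter still disjoint from it. -/
lemma prime_sep {F C : Set A} (hF : R.IsFilter F)
    (hC : ∀ c1 ∈ C, ∀ c2 ∈ C, c1 ⊔ c2 ∈ C) (hCne : C.Nonempty)
    (hdisj : ∀ a ∈ F, a ∉ C) :
    ∃ P : Set A, R.IsPrime P ∧ F ⊆ P ∧ ∀ a ∈ P, a ∉ C := by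
  set S : Set (Set A) := {G | R.IsFilter G ∧ F ⊆ G ∧ ∀ a ∈ G, a ∉ C} with hS
  have hchaincond : ∀ c ⊆ S, IsChain (· ⊆ ·) c → c.Nonempty →
      ∃ ub ∈ S, ∀ s ∈ c, s ⊆ ub := by
    intro c hcS hchain hcne
    refine ⟨⋃₀ c, ⟨⟨?_, ?_, ?_⟩, ?_, ?_⟩, fun s hs => Set.subset_sUnion_of_mem hs⟩
    · obtain ⟨G, hG⟩ := hcne
      obtain ⟨a, ha⟩ := (hcS hG).1.1
      exact ⟨a, G, hG, ha⟩
    · rintro x ⟨G1, hG1, hx⟩ y ⟨G2, hG2, hy⟩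
      rcases hchain.total hG1 hG2 with h | h
      · exact ⟨G2, hG2, (hcS hG2).1.2.1 x (h hx) y hy⟩
      · exact ⟨G1, hG1, (hcS hG1).1.2.1 x hx y (h hy)⟩
    · rintro x ⟨G, hG, hx⟩ y
      exact ⟨G, hG, (hcS hG).1.2.2 x hx y⟩
    · obtain ⟨G, hG⟩ := hcne
      exact subset_trans (hcS hG).2.1 (Set.subset_sUnion_of_mem hG)
    · rintro a ⟨G, hG, haG⟩
      exact (hcS hG).2.2 a haG
  obtain ⟨P, hFP, hPmax⟩ := zorn_subset_nonempty S hchaincond F ⟨hF, subset_rfl, hdisj⟩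
  · obtain ⟨hPfil, hFsub, hPdisj⟩ := hPmax.prop
    refine ⟨P, ⟨hPfil, ?_, ?_⟩, hFsub, hPdisj⟩
    · intro h
      obtain ⟨c, hc⟩ := hCne
      exact hPdisj c (h ▸ Set.mem_univ c) hc
    · intro a b hab
      by_contra hcon
      push_neg at hcon
      obtain ⟨ha, hb⟩ := hcon
      -- FGen P a meets C
      have hmeet : ∀ t : A, t ∉ P → ∃ c ∈ C, ∃ f ∈ P, ∃ n : ℕ, R.mul f (R.pow t n) ≤ c := by
        intro t ht
        by_contra hno
        push_neg at hno
        have hmem : R.FGen P t ∈ S := by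
          refine ⟨FGen_filter R hPfil t, subset_trans hFsub (subset_FGen R t), ?_⟩
          rintro c ⟨f, hf, n, hle⟩ hcC
          exact hno c hcC f hf n hle
        have := hPmax.2 hmem (subset_FGen R t)
        exact ht (this (mem_FGen R hPfil t))
      obtain ⟨c1, hc1, f1, hf1, n, h1⟩ := hmeet a ha
      obtain ⟨c2, hc2, f2, hf2, m, h2⟩ := hmeet b hb
      have hinP : R.mul (R.mul f1 f2) (R.pow (a ⊔ b) (n + m)) ∈ P :=
        hPfil.2.1 _ (hPfil.2.1 _ hf1 _ hf2) _ (pow_mem R hPfil hab (n+m))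
      have hle : R.mul (R.mul f1 f2) (R.pow (a ⊔ b) (n + m)) ≤ c1 ⊔ c2 := by
        calc R.mul (R.mul f1 f2) (R.pow (a ⊔ b) (n + m))
            ≤ R.mul (R.mul f1 f2) (R.pow a n ⊔ R.pow b m) :=
              rmul_mono R le_rfl (pow_sup_le R a b n m)
          _ = R.mul (R.mul f1 f2) (R.pow a n) ⊔ R.mul (R.mul f1 f2) (R.pow b m) :=
              rmul_sup R _ _ _
          _ ≤ c1 ⊔ c2 := by
              refine sup_le_sup (le_trans ?_ h1) (le_trans ?_ h2)
              · exact rmul_mono R (rmul_le_left R f1 f2) le_rfl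
              · exact rmul_mono R (rmul_le_right R f1 f2) le_rfl
      have : c1 ⊔ c2 ∈ P := up_closed R hPfil hinP hle
      exact hPdisj _ this (hC c1 hc1 c2 hc2)

lemma prime_proper_bot {P : Set A} (hP : R.IsPrime P) : ⊥ ∉ P := by
  intro h
  exact hP.2.1 (eq_univ_of_bot_mem R hP.1 h)

lemma perp_subset_prime {P : Set A} (hP : R.IsPrime P) {x : A} (hx : x ∉ P) :
    R.perp x ⊆ P := by
  intro z hz
  have hz' : z ⊔ x = ⊤ := hz
  have : z ⊔ x ∈ P := by rw [hz']; exact top_mem R hP.1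
  rcases hP.2.2 z x this with h | h
  · exact h
  · exact absurd h hx

/-- If P is prime and x⊥ ⊆ P, there is a prime Q ⊆ P with x ∉ Q. -/
lemma sep_below {P : Set A} (hP : R.IsPrime P) {x : A} (hx : R.perp x ⊆ P) :
    ∃ Q : Set A, R.IsPrime Q ∧ Q ⊆ P ∧ x ∉ Q := by
  set C : Set A := {c | ∃ s, s ∉ P ∧ c ≤ s ⊔ x} with hCdef
  have hbot : (⊥ : A) ∉ P := prime_proper_bot R hP
  have hCclosed : ∀ c1 ∈ C, ∀ c2 ∈ C, c1 ⊔ c2 ∈ C := by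
    rintro c1 ⟨s1, hs1, h1⟩ c2 ⟨s2, hs2, h2⟩
    refine ⟨s1 ⊔ s2, ?_, ?_⟩
    · intro h
      rcases hP.2.2 s1 s2 h with h' | h'
      · exact hs1 h'
      · exact hs2 h'
    · calc c1 ⊔ c2 ≤ (s1 ⊔ x) ⊔ (s2 ⊔ x) := sup_le_sup h1 h2
        _ = (s1 ⊔ s2) ⊔ x := by rw [sup_sup_sup_comm, sup_idem]
  have hCne : C.Nonempty := ⟨⊥, ⊥, hbot, bot_le⟩
  have hFtop : R.IsFilter ({⊤} : Set A) := by
    refine ⟨⟨⊤, rfl⟩, ?_, ?_⟩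
    · rintro a rfl b rfl
      simp only [Set.mem_singleton_iff]
      rw [R.mul_top]
    · rintro a rfl y
      simp
  have hdisj : ∀ a ∈ ({⊤} : Set A), a ∉ C := by
    rintro a rfl ⟨s, hs, hle⟩
    have : s ⊔ x = ⊤ := top_le_iff.mp hle
    have : s ∈ R.perp x := this
    exact hs (hx this)
  obtain ⟨Q, hQ, _, hQdisj⟩ := prime_sep R hFtop hCclosed hCne hdisj
  refine ⟨Q, hQ, ?_, ?_⟩
  · intro q hq
    by_contra hqp
    exact hQdisj q hq ⟨q, hqp, le_sup_left⟩
  · intro hxQ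
    exact hQdisj x hxQ ⟨⊥, hbot, by rw [bot_sup_eq]⟩

/-- Every prime filter contains a minimal prime filter. -/
lemma min_below {P : Set A} (hP : R.IsPrime P) :
    ∃ m : Set A, R.IsMinimalPrime m ∧ m ⊆ P := by
  set S : Set (Set A) := {Q | R.IsPrime Q ∧ Q ⊆ P} with hS
  have hchaincond : ∀ c ⊆ S, IsChain (· ⊆ ·) c → c.Nonempty →
      ∃ lb ∈ S, ∀ s ∈ c, lb ⊆ s := by
    intro c hcS hchain hcne
    refine ⟨⋂₀ c, ⟨⟨⟨?_, ?_, ?_⟩, ?_, ?_⟩, ?_⟩, fun s hs => Set.sInter_subset_of_mem hs⟩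
    · exact ⟨⊤, fun G hG => top_mem R (hcS hG).1.1⟩
    · rintro x hx y hy
      exact fun G hG => (hcS hG).1.1.2.1 x (hx G hG) y (hy G hG)
    · rintro x hx y
      exact fun G hG => (hcS hG).1.1.2.2 x (hx G hG) y
    · intro h
      obtain ⟨G, hG⟩ := hcne
      have : (⊥ : A) ∈ G := (h ▸ Set.mem_univ (⊥:A) : (⊥:A) ∈ ⋂₀ c) G hG
      exact prime_proper_bot R (hcS hG).1 this
    · intro x y hxy
      by_contra hcon
      push_neg at hcon
      obtain ⟨hx, hy⟩ := hcon
      simp only [Set.mem_sInter, not_forall] at hx hy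
      obtain ⟨G1, hG1, hx1⟩ := hx
      obtain ⟨G2, hG2, hy2⟩ := hy
      rcases hchain.total hG1 hG2 with h | h
      · rcases (hcS hG1).1.2.2 x y (hxy G1 hG1) with h' | h'
        · exact hx1 h'
        · exact hy2 (h h')
      · rcases (hcS hG2).1.2.2 x y (hxy G2 hG2) with h' | h'
        · exact hx1 (h h')
        · exact hy2 h'
    · obtain ⟨G, hG⟩ := hcne
      exact subset_trans (Set.sInter_subset_of_mem hG) (hcS hG).2
  obtain ⟨m, hmP, hmmin⟩ := zorn_superset_nonempty S hchaincond P ⟨hP, subset_rfl⟩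
  refine ⟨m, ⟨hmmin.prop.1, ?_⟩, hmmin.prop.2⟩
  intro G hG hGm
  exact Set.Subset.antisymm hGm (hmmin.2 ⟨hG, subset_trans hGm hmmin.prop.2⟩ hGm)

/-- A minimal prime filter omits some coannulet witness for each of its members. -/
lemma min_prime_perp {p : Set A} (hp : R.IsMinimalPrime p) {x : A} (hx : x ∈ p) :
    ∃ y, y ∉ p ∧ x ⊔ y = ⊤ := by
  by_contra h
  push_neg at h
  have hperp : R.perp x ⊆ p := by
    intro z hz
    by_contra hzp
    exact h z hzp (by rw [sup_comm]; exact hz)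
  obtain ⟨Q, hQ, hQp, hxQ⟩ := sep_below R hp.1 hperp
  have := hp.2 Q hQ hQp
  exact hxQ (this ▸ hx)

end ResiduatedLattice

end Aux


theorem stmt17 (R : ResiduatedLattice A) :
    ((∀ p q : Set A, R.IsMinimalPrime p → R.IsMinimalPrime q → p ≠ q →
        R.FJoin p q = Set.univ) ↔
      (∀ x y : A, x ⊔ y = ⊤ → R.FJoin (R.perp x) (R.perp y) = Set.univ)) ∧
    ((∀ x y : A, x ⊔ y = ⊤ → R.FJoin (R.perp x) (R.perp y) = Set.univ) ↔
      (∀ x : A, R.PureOn (R.perp x))) := by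
  constructor
  · constructor
    · -- mp → coannulet condition
      intro h x y hxy
      by_contra hne
      have hfil : R.IsFilter (R.FJoin (R.perp x) (R.perp y)) :=
        FJoin_filter R (perp_filter R x) (perp_filter R y)
      have hbot : ⊥ ∉ R.FJoin (R.perp x) (R.perp y) := fun hb =>
        hne (eq_univ_of_bot_mem R hfil hb)
      obtain ⟨P, hP, hsub, hdisj⟩ := prime_sep R (C := {⊥}) hfil
        (by rintro c1 rfl c2 rfl; simp) ⟨⊥, rfl⟩ (by rintro a ha rfl; exact hbot ha)
      have hxP : R.perp x ⊆ P := subset_trans (subset_FJoin_left R (perp_filter R y)) hsub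
      have hyP : R.perp y ⊆ P := subset_trans (subset_FJoin_right R (perp_filter R x)) hsub
      obtain ⟨Q1, hQ1, hQ1P, hxQ1⟩ := sep_below R hP hxP
      obtain ⟨Q2, hQ2, hQ2P, hyQ2⟩ := sep_below R hP hyP
      obtain ⟨m1, hm1, hm1Q1⟩ := min_below R hQ1
      obtain ⟨m2, hm2, hm2Q2⟩ := min_below R hQ2
      have hxm1 : x ∉ m1 := fun h' => hxQ1 (hm1Q1 h')
      have hym2 : y ∉ m2 := fun h' => hyQ2 (hm2Q2 h')
      have hym1 : y ∈ m1 := by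
        have hmem : x ⊔ y ∈ m1 := by rw [hxy]; exact top_mem R hm1.1.1
        rcases hm1.1.2.2 x y hmem with h' | h'
        · exact absurd h' hxm1
        · exact h'
      have hm1m2 : m1 ≠ m2 := fun he => hym2 (he ▸ hym1)
      have huniv := h m1 m2 hm1 hm2 hm1m2
      have hsubP : R.FJoin m1 m2 ⊆ P :=
        subset_trans (FJoin_mono R (subset_trans hm1Q1 hQ1P) (subset_trans hm2Q2 hQ2P))
          (FJoin_self R hP.1)
      rw [huniv] at hsubP
      exact hP.2.1 (Set.eq_univ_of_univ_subset hsubP)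
    · intro h p q hp hq hne
      have hxex : ∃ x ∈ p, x ∉ q := by
        by_contra hc
        push_neg at hc
        exact hne (hq.2 p hp.1 hc)
      obtain ⟨x, hxp, hxq⟩ := hxex
      obtain ⟨y, hyp, hxy⟩ := min_prime_perp R hp hxp
      have h1 : R.perp x ⊆ q := perp_subset_prime R hq.1 hxq
      have h2 : R.perp y ⊆ p := perp_subset_prime R hp.1 hyp
      have huniv := h x y hxy
      apply Set.eq_univ_of_univ_subset
      rw [← huniv]
      calc R.FJoin (R.perp x) (R.perp y) ⊆ R.FJoin q p := FJoin_mono R h1 h2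
        _ = R.FJoin p q := FJoin_comm R q p
  · constructor
    · intro h x a ha
      exact h a x ha
    · intro h x y hxy
      have hy : y ∈ R.perp x := by
        show y ⊔ x = ⊤
        rw [sup_comm]
        exact hxy
      have := h x y hy
      rw [FJoin_comm] at this
      exact this
end
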